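/- arXiv:2209.12783 — 4 statements merged into one kernel-verified Lean document; each statement's English description precedes it below -/
import Mathlib

section
/- For an n×n positive definite Hermitian matrix A with all eigenvalues at least 1, a vector v ∈ ℂⁿ, and a scalar α ≥ 0, it holds that det(A + α v vᴴ) = det(A)·(1 + α vᴴ A⁻¹ v) ≥ det(A) + α ‖v‖². -/
/-!
The identity is the matrix determinant lemma. For the inequality: since every eigenvalue of `A`
is at least `1`, `det A = ∏ λᵢ` dominates each `λᵢ`, so the spectrum `{det A / λᵢ}` of
`(det A) • A⁻¹` lies in `[1, ∞)`, i.e. `1 ≤ (det A) • A⁻¹` in the Loewner order. Evaluated at `v`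
this gives `‖v‖² ≤ det A · Re (vᴴ A⁻¹ v)`, and the real part of `det A · (1 + α vᴴ A⁻¹ v)` is
`det A + α · det A · Re (vᴴ A⁻¹ v)`.
-/

open Matrix ComplexOrder

namespace Matrix

variable {m : Type*} [Fintype m]

theorem det_add_smul_vecMulVec_eq [DecidableEq m] {R : Type*} [CommRing R] {A : Matrix m m R}
    (hA : IsUnit A.det) (c : R) (u w : m → R) :
    (A + c • vecMulVec u w).det = A.det * (1 + c * (w ⬝ᵥ (A⁻¹ *ᵥ u))) := by
  rw [← smul_vecMulVec, vecMulVec_eq Unit, det_add_replicateCol_mul_replicateRow hA,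
    Matrix.mul_assoc, ← replicateCol_mulVec, det_unique (1 + _ : Matrix Unit Unit R), add_apply,
    replicateRow_mul_replicateCol_apply, mulVec_smul, dotProduct_smul, smul_eq_mul, one_apply_eq]

variable {𝕜 : Type*} [RCLike 𝕜]

open scoped MatrixOrder

theorem star_dotProduct_mulVec_mono {A B : Matrix m m 𝕜} (h : A ≤ B) (x : m → 𝕜) :
    star x ⬝ᵥ (A *ᵥ x) ≤ star x ⬝ᵥ (B *ᵥ x) := by
  have := (le_iff.mp h).dotProduct_mulVec_nonneg x
  rwa [sub_mulVec, dotProduct_sub, sub_nonneg] at this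

theorem PosDef.one_le_smul_inv [DecidableEq m] {A : Matrix m m 𝕜} (hA : A.PosDef) {c : ℝ}
    (hc : ∀ i, hA.1.eigenvalues i ≤ c) : 1 ≤ c • A⁻¹ := by
  -- `c • A⁻¹ = cfc (c * ·⁻¹) A`; every function is continuous on the finite spectrum of `A`.
  rw [nonsing_inv_eq_ringInverse, ← cfc_ringInverse_id (R := ℝ) A hA.isUnit hA.1.isSelfAdjoint,
    ← cfc_const_mul _ _ _ ((finite_real_spectrum (A := A)).continuousOn _)]
  refine one_le_cfc _ _ ?_ ((finite_real_spectrum (A := A)).continuousOn _) hA.1.isSelfAdjoint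
  rw [hA.1.spectrum_real_eq_range_eigenvalues]
  rintro _ ⟨i, rfl⟩
  rw [← div_eq_mul_inv, one_le_div (hA.eigenvalues_pos i)]
  exact hc i

end Matrix

theorem Complex.re_star_dotProduct_self {m : Type*} [Fintype m] (v : m → ℂ) :
    (star v ⬝ᵥ v).re = ∑ i, ‖v i‖ ^ 2 := by
  simp only [dotProduct, Pi.star_apply, Complex.star_def, Complex.re_sum, Complex.conj_mul']
  norm_cast

theorem Finset.single_le_prod_of_one_le {ι R : Type*} [Fintype ι] [CommMonoidWithZero R]
    [PartialOrder R] [ZeroLEOneClass R] [PosMulMono R] {f : ι → R} (hf : ∀ i, 1 ≤ f i) (i : ι) :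
    f i ≤ ∏ j, f j := by
  simpa using prod_le_prod_of_subset_of_one_le (subset_univ {i})
    (by simpa using zero_le_one.trans (hf i)) fun j _ _ ↦ hf j

theorem det_add_smul_vecMulVec
    {n : ℕ} (A : Matrix (Fin n) (Fin n) ℂ) (hA : A.PosDef)
    (heig : ∀ i, 1 ≤ hA.1.eigenvalues i)
    (v : Fin n → ℂ) (α : ℝ) (hα : 0 ≤ α) :
    (A + (α : ℂ) • vecMulVec v (star v)).det
      = A.det * (1 + (α : ℂ) * (star v ⬝ᵥ (A⁻¹ *ᵥ v))) ∧
    A.det.re + α * (∑ i, ‖v i‖ ^ 2)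
      ≤ ((A + (α : ℂ) • vecMulVec v (star v)).det).re := by
  have hq : star v ⬝ᵥ v ≤ A.det * (star v ⬝ᵥ (A⁻¹ *ᵥ v)) := by
    rw [hA.1.det_eq_prod_eigenvalues]
    simpa [smul_mulVec, Complex.real_smul] using star_dotProduct_mulVec_mono
      (hA.one_le_smul_inv (Finset.single_le_prod_of_one_le heig)) v
  rw [det_add_smul_vecMulVec_eq hA.det_pos.ne'.isUnit]
  refine ⟨rfl, ?_⟩
  calc A.det.re + α * ∑ i, ‖v i‖ ^ 2 = A.det.re + α * (star v ⬝ᵥ v).re := by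
        rw [Complex.re_star_dotProduct_self]
    _ ≤ A.det.re + α * (A.det * (star v ⬝ᵥ (A⁻¹ *ᵥ v))).re := by
        gcongr
    _ = (A.det * (1 + α * (star v ⬝ᵥ (A⁻¹ *ᵥ v)))).re := by
        rw [mul_add, mul_one, mul_left_comm, Complex.add_re, Complex.re_ofReal_mul]
end

section
/- Let X = U·V where U and V are independent random variables with U ~ Gamma(N_R, 1) and V ~ Gamma(N_T, 1) (N_T, N_R positive integers). Then the probability density function of X is f_X(x) = 2 x^{(N_T+N_R)/2 - 1} K_τ(2√x) / (Γ(N_T) Γ(N_R)) for x > 0, where τ = |N_T - N_R| and K_τ is the modified Bessel function of the second kind of order τ. -/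
/-!
The law of a product `UV` of independent variables, `V` having density `g`, has density
`x ↦ ∫ g(x/u) / |u| dP_U(u)`. For gamma laws of shapes `a`, `b` the integrand is, up to constants,
`u^(a-b-1) exp(-(u + x/u))`. The substitution `u = √x eᵗ` turns its integral into
`∫_ℝ e^{(a-b)t} exp(-2√x cosh t) dt`, and folding `t` onto `-t` gives twice the cosh-integral
defining `K_{a-b}(2√x)`.
-/

open Real Set Filter MeasureTheory ProbabilityTheory

/-- The modified Bessel function of the second kind, via its standard
integral representation `K_ν(x) = ∫₀^∞ exp(-x cosh t) cosh(ν t) dt` (valid for `x > 0`). -/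
noncomputable def besselK (ν x : ℝ) : ℝ :=
  ∫ t in Ioi (0 : ℝ), Real.exp (-x * Real.cosh t) * Real.cosh (ν * t)

open scoped ENNReal

lemma besselK_abs (ν z : ℝ) : besselK |ν| z = besselK ν z := by
  rcases abs_cases ν with ⟨h, -⟩ | ⟨h, -⟩ <;> simp only [besselK, h, neg_mul, cosh_neg]

lemma exp_neg_mul_cosh_mul_cosh_le {ν z t : ℝ} (hz : 0 < z) (ht : 0 ≤ t) :
    exp (-z * cosh t) * cosh (ν * t) ≤ exp ((|ν| + 1) ^ 2 / z) * exp (-t) := by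
  have hcosh_mul : cosh (ν * t) ≤ exp (|ν| * t) := by
    have h₁ : exp (ν * t) ≤ exp (|ν| * t) := exp_le_exp.2 (by nlinarith [le_abs_self ν])
    have h₂ : exp (-(ν * t)) ≤ exp (|ν| * t) := exp_le_exp.2 (by nlinarith [neg_abs_le ν])
    rw [cosh_eq]
    linarith
  have hcosh_ge : t ^ 2 / 4 ≤ cosh t := by
    rw [cosh_eq]
    nlinarith [quadratic_le_exp_of_nonneg ht, exp_pos (-t)]
  have hC : z * ((|ν| + 1) ^ 2 / z) = (|ν| + 1) ^ 2 := mul_div_cancel₀ _ hz.ne'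
  calc exp (-z * cosh t) * cosh (ν * t) ≤ exp (-z * cosh t) * exp (|ν| * t) := by gcongr
    _ = exp (-z * cosh t + |ν| * t) := (exp_add _ _).symm
    _ ≤ exp ((|ν| + 1) ^ 2 / z + -t) := by
        refine exp_le_exp.2 ?_
        -- AM-GM: `(|ν| + 1) t ≤ (|ν| + 1) ^ 2 / z + z t ^ 2 / 4`
        nlinarith [sq_nonneg (|ν| + 1 - z * t / 2), mul_le_mul_of_nonneg_left hcosh_ge hz.le]
    _ = exp ((|ν| + 1) ^ 2 / z) * exp (-t) := exp_add _ _

lemma ofReal_besselK (ν : ℝ) {z : ℝ} (hz : 0 < z) :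
    ENNReal.ofReal (besselK ν z) =
      ∫⁻ t in Ioi 0, ENNReal.ofReal (exp (-z * cosh t) * cosh (ν * t)) := by
  have hint : IntegrableOn (fun t => exp (-z * cosh t) * cosh (ν * t)) (Ioi 0) := by
    refine Integrable.mono'
      ((exp_neg_integrableOn_Ioi 0 one_pos).const_mul (exp ((|ν| + 1) ^ 2 / z)))
      (by fun_prop : Continuous fun t => exp (-z * cosh t) * cosh (ν * t)).aestronglyMeasurable ?_
    filter_upwards [ae_restrict_mem measurableSet_Ioi] with t (ht : 0 < t)
    rw [norm_of_nonneg (by positivity)]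
    simpa using exp_neg_mul_cosh_mul_cosh_le (ν := ν) hz ht.le
  exact ofReal_integral_eq_lintegral_ofReal hint (ae_of_all _ fun t => by positivity)

lemma lintegral_eq_setLIntegral_Ioi_add_comp_neg {f : ℝ → ℝ≥0∞} (hf : Measurable f) :
    ∫⁻ t, f t = ∫⁻ t in Ioi 0, (f t + f (-t)) := by
  have hreflect : ∫⁻ t in Iic 0, f t = ∫⁻ t in Ioi 0, f (-t) := by
    rw [Measure.restrict_congr_set Iio_ae_eq_Iic.symm, show Iio (0 : ℝ) = Neg.neg '' Ioi 0 by simp,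
      lintegral_image_eq_lintegral_abs_deriv_mul measurableSet_Ioi
        (fun t _ => (hasDerivAt_neg t).hasDerivWithinAt) neg_injective.injOn]
    simp
  rw [← lintegral_add_compl f measurableSet_Ioi, compl_Ioi, hreflect,
    lintegral_add_left' hf.aemeasurable]

lemma lintegral_exp_mul_mul_exp_neg_mul_cosh (ν : ℝ) {z : ℝ} (hz : 0 < z) :
    ∫⁻ t, ENNReal.ofReal (exp (ν * t) * exp (-z * cosh t)) = ENNReal.ofReal (2 * besselK ν z) := by
  rw [lintegral_eq_setLIntegral_Ioi_add_comp_neg (by fun_prop), ENNReal.ofReal_mul zero_le_two,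
    ofReal_besselK ν hz, ← lintegral_const_mul' _ _ ENNReal.ofReal_ne_top]
  refine setLIntegral_congr_fun measurableSet_Ioi fun t _ => ?_
  rw [← ENNReal.ofReal_add (by positivity) (by positivity), ← ENNReal.ofReal_mul zero_le_two,
    cosh_neg, cosh_eq (ν * t)]
  congr 1
  ring_nf

theorem lintegral_rpow_mul_exp_neg_add_sq_div (ν : ℝ) {c : ℝ} (hc : 0 < c) :
    ∫⁻ u in Ioi 0, ENNReal.ofReal (u ^ (ν - 1) * exp (-(u + c ^ 2 / u))) =
      ENNReal.ofReal (2 * c ^ ν * besselK ν (2 * c)) := by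
  have himage : (c * exp ·) '' univ = Ioi 0 := by
    rw [show (c * exp ·) = (c * ·) ∘ exp from rfl, image_comp, image_univ, range_exp,
      image_const_mul_Ioi_zero hc]
  have hintegrand (t : ℝ) :
      |c * exp t| * ((c * exp t) ^ (ν - 1) * exp (-(c * exp t + c ^ 2 / (c * exp t)))) =
        c ^ ν * (exp (ν * t) * exp (-(2 * c) * cosh t)) := by
    have h₁ : c ^ 2 / (c * exp t) = c * exp (-t) := by rw [exp_neg]; field_simp
    have h₂ : exp t * exp (t * (ν - 1)) = exp (ν * t) := by rw [← exp_add]; ring_nf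
    have h₃ : -(2 * c) * cosh t = -(c * exp t + c * exp (-t)) := by rw [cosh_eq]; ring
    rw [abs_of_pos (by positivity), mul_rpow hc.le (exp_pos t).le, ← exp_mul,
      rpow_sub_one hc.ne', h₁, h₃, ← h₂]
    field_simp
  rw [← himage, lintegral_image_eq_lintegral_abs_deriv_mul MeasurableSet.univ
      (fun t _ => ((hasDerivAt_exp t).const_mul c).hasDerivWithinAt)
      ((mul_right_injective₀ hc.ne').comp exp_injective).injOn, setLIntegral_univ]
  simp_rw [← ENNReal.ofReal_mul (abs_nonneg _), hintegrand,
    ENNReal.ofReal_mul (by positivity : 0 ≤ c ^ ν)]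
  rw [lintegral_const_mul' _ _ ENNReal.ofReal_ne_top,
    lintegral_exp_mul_mul_exp_neg_mul_cosh ν (by positivity), ← ENNReal.ofReal_mul (by positivity)]
  ring_nf

lemma withDensity_preimage_mul_left {g : ℝ → ℝ≥0∞} (hg : Measurable g) {u : ℝ} (hu : u ≠ 0)
    {s : Set ℝ} (hs : MeasurableSet s) :
    volume.withDensity g ((u * ·) ⁻¹' s) = ∫⁻ x in s, ENNReal.ofReal |u|⁻¹ * g (u⁻¹ * x) := by
  have hg' : Measurable fun x => g (u⁻¹ * x) := hg.comp (measurable_const_mul _)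
  calc volume.withDensity g ((u * ·) ⁻¹' s)
      = ∫⁻ v in (u * ·) ⁻¹' s, g (u⁻¹ * (u * v)) := by
        simp_rw [inv_mul_cancel_left₀ hu]
        exact withDensity_apply _ (measurable_const_mul u hs)
    _ = ∫⁻ x in s, g (u⁻¹ * x) ∂(volume.map (u * ·)) :=
        (setLIntegral_map hs hg' (measurable_const_mul u)).symm
    _ = ∫⁻ x in s, ENNReal.ofReal |u|⁻¹ * g (u⁻¹ * x) := by
        rw [Real.map_volume_mul_left hu, Measure.restrict_smul, lintegral_smul_measure,
          lintegral_const_mul _ hg', abs_inv, smul_eq_mul]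

theorem map_mul_prod_withDensity (μ : Measure ℝ) [SFinite μ] (hμ : μ {0} = 0) {g : ℝ → ℝ≥0∞}
    (hg : Measurable g) :
    (μ.prod (volume.withDensity g)).map (fun p => p.1 * p.2) =
      volume.withDensity fun x => ∫⁻ u, ENNReal.ofReal |u|⁻¹ * g (u⁻¹ * x) ∂μ := by
  have hmul : Measurable fun p : ℝ × ℝ => p.1 * p.2 := measurable_fst.mul measurable_snd
  ext s hs
  rw [Measure.map_apply hmul hs, Measure.prod_apply (hmul hs), withDensity_apply _ hs,
    lintegral_lintegral_swap]
  · refine lintegral_congr_ae ?_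
    filter_upwards [compl_mem_ae_iff.2 hμ] with u hu
    exact withDensity_preimage_mul_left hg hu hs
  · exact ((measurable_snd.abs.inv.ennreal_ofReal).mul
      (hg.comp (measurable_snd.inv.mul measurable_fst))).aemeasurable

@[fun_prop]
lemma measurable_gammaPDF (a r : ℝ) : Measurable (gammaPDF a r) :=
  (measurable_gammaPDFReal a r).ennreal_ofReal

lemma lintegral_gammaMeasure {a r : ℝ} {F : ℝ → ℝ≥0∞} (hF : Measurable F) :
    ∫⁻ u, F u ∂gammaMeasure a r = ∫⁻ u in Ioi 0, gammaPDF a r u * F u := by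
  rw [gammaMeasure, lintegral_withDensity_eq_lintegral_mul _ (measurable_gammaPDF a r) hF,
    Measure.restrict_congr_set Ioi_ae_eq_Ici]
  refine (setLIntegral_eq_of_support_subset fun u hu => ?_).symm
  by_contra hneg
  exact hu (by simp [gammaPDF_of_neg (not_le.1 hneg)])

lemma gammaPDF_mul_gammaPDF_inv_mul {a b x u : ℝ} (ha : 0 < a) (hb : 0 < b) (hx : 0 < x)
    (hu : 0 < u) :
    gammaPDF a 1 u * (ENNReal.ofReal |u|⁻¹ * gammaPDF b 1 (u⁻¹ * x)) =
      ENNReal.ofReal ((Gamma a * Gamma b)⁻¹ * x ^ (b - 1)) *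
        ENNReal.ofReal (u ^ (a - b - 1) * exp (-(u + √x ^ 2 / u))) := by
  have hΓa := Gamma_pos_of_pos ha
  have hΓb := Gamma_pos_of_pos hb
  have hpow : u ^ (a - b - 1) = u ^ (a - 1) / u ^ (b - 1) / u := by
    rw [← rpow_sub hu, ← rpow_sub_one hu.ne']
    ring_nf
  rw [gammaPDF_of_nonneg hu.le, gammaPDF_of_nonneg (by positivity), abs_of_pos hu,
    ← ENNReal.ofReal_mul (by positivity), ← ENNReal.ofReal_mul (by positivity),
    ← ENNReal.ofReal_mul (by positivity)]
  congr 1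
  rw [sq_sqrt hx.le, one_rpow, one_rpow, mul_rpow (inv_pos.2 hu).le hx.le, inv_rpow hu.le, hpow,
    neg_add, exp_add]
  field_simp

lemma lintegral_gammaPDF_mul_gammaPDF_inv_mul {a b x : ℝ} (ha : 0 < a) (hb : 0 < b) (hx : 0 < x) :
    ∫⁻ u in Ioi 0, gammaPDF a 1 u * (ENNReal.ofReal |u|⁻¹ * gammaPDF b 1 (u⁻¹ * x)) =
      ENNReal.ofReal (2 * x ^ ((a + b) / 2 - 1) * besselK (a - b) (2 * √x) /
        (Gamma a * Gamma b)) := by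
  rw [setLIntegral_congr_fun measurableSet_Ioi
      fun u hu => gammaPDF_mul_gammaPDF_inv_mul ha hb hx hu,
    lintegral_const_mul' _ _ ENNReal.ofReal_ne_top,
    lintegral_rpow_mul_exp_neg_add_sq_div _ (sqrt_pos.2 hx),
    ← ENNReal.ofReal_mul (by have := Gamma_pos_of_pos ha; have := Gamma_pos_of_pos hb; positivity)]
  congr 1
  have hsqrt : √x ^ (a - b) = x ^ ((a - b) / 2) := by
    rw [sqrt_eq_rpow, ← rpow_mul hx.le]; ring_nf
  have hpow : x ^ (b - 1) * x ^ ((a - b) / 2) = x ^ ((a + b) / 2 - 1) := by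
    rw [← rpow_add hx]; ring_nf
  rw [hsqrt, ← hpow]
  ring

theorem map_mul_prod_gammaMeasure {a b : ℝ} (ha : 0 < a) (hb : 0 < b) :
    ((gammaMeasure a 1).prod (gammaMeasure b 1)).map (fun p => p.1 * p.2) =
      volume.withDensity fun x => ENNReal.ofReal (if 0 < x then
        2 * x ^ ((a + b) / 2 - 1) * besselK |a - b| (2 * √x) / (Gamma a * Gamma b) else 0) := by
  have := isProbabilityMeasure_gammaMeasure ha one_pos
  have hatom : gammaMeasure a 1 {0} = 0 :=
    withDensity_absolutelyContinuous _ _ Real.volume_singleton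
  rw [show gammaMeasure b 1 = volume.withDensity (gammaPDF b 1) from rfl,
    map_mul_prod_withDensity _ hatom (measurable_gammaPDF b 1)]
  refine withDensity_congr_ae ?_
  filter_upwards [compl_mem_ae_iff.2 Real.volume_singleton] with x (hx : x ≠ 0)
  rw [lintegral_gammaMeasure (by fun_prop)]
  rcases hx.lt_or_gt with hneg | hpos
  · rw [if_neg hneg.not_gt, ENNReal.ofReal_zero]
    refine (setLIntegral_congr_fun measurableSet_Ioi fun u (hu : 0 < u) => ?_).trans lintegral_zero
    rw [gammaPDF_of_neg (mul_neg_of_pos_of_neg (inv_pos.2 hu) hneg), mul_zero, mul_zero]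
  · rw [if_pos hpos, besselK_abs, lintegral_gammaPDF_mul_gammaPDF_inv_mul ha hb hpos]

theorem pdf_product_of_gammas
    {Ω : Type*} [MeasureSpace Ω] [IsProbabilityMeasure (ℙ : Measure Ω)]
    (N_T N_R : ℕ) (hNT : 1 ≤ N_T) (hNR : 1 ≤ N_R)
    (U V : Ω → ℝ) (hU : Measurable U) (hV : Measurable V)
    (hUlaw : Measure.map U ℙ = gammaMeasure N_R 1)
    (hVlaw : Measure.map V ℙ = gammaMeasure N_T 1)
    (hindep : IndepFun U V ℙ) :
    Measure.map (fun ω => U ω * V ω) ℙ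
      = volume.withDensity (fun x : ℝ => ENNReal.ofReal
          (if 0 < x then
            2 * x ^ (((N_T : ℝ) + N_R) / 2 - 1) *
              besselK (|(N_T : ℝ) - N_R|) (2 * Real.sqrt x) /
              (Real.Gamma N_T * Real.Gamma N_R)
          else 0)) := by
  have hlaw : Measure.map (fun ω => (V ω, U ω)) ℙ =
      (gammaMeasure N_T 1).prod (gammaMeasure N_R 1) := by
    rw [← hUlaw, ← hVlaw]
    exact (indepFun_iff_map_prod_eq_prod_map_map hV.aemeasurable hU.aemeasurable).1 hindep.symm
  -- writing `U * V` as `V * U` puts the shapes in the order of the target formula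
  have hprod : (fun ω => U ω * V ω) = (fun p : ℝ × ℝ => p.1 * p.2) ∘ fun ω => (V ω, U ω) :=
    funext fun ω => mul_comm (U ω) (V ω)
  have hmul : Measurable fun p : ℝ × ℝ => p.1 * p.2 := by fun_prop
  rw [hprod, ← Measure.map_map hmul (hV.prodMk hU), hlaw]
  exact map_mul_prod_gammaMeasure (Nat.cast_pos.2 hNT) (Nat.cast_pos.2 hNR)
end

section
/- Let U ~ Gamma(N_R, 1) and V ~ Gamma(N_T, 1) be independent with positive integers N_T > N_R, and let X = U·V. Then as x → 0⁺, the CDF F_X(x) satisfies F_X(x) ~ Γ(N_T - N_R) x^{N_R} / (Γ(N_T) Γ(N_R) N_R), i.e., lim_{x→0⁺} F_X(x) / (Γ(N_T-N_R) x^{N_R}/(Γ(N_T)Γ(N_R) N_R)) = 1. -/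
/-!
Write `a = N_R`, `b = N_T`. Conditioning on `V`, `F_X(x) = ∫ F_U(x / v) dP_V(v)`. The Gamma(a)
CDF satisfies `e^{-t} t^a / Γ(a + 1) ≤ F_U(t) ≤ t^a / Γ(a + 1)`, so `F_X(x)` is squeezed between
`x^a / Γ(a + 1) · E[e^{-x/V} V^{-a}]` and `x^a / Γ(a + 1) · E[V^{-a}]`. The negative moment
`E[V^{-a}] = Γ(b - a) / Γ(b)` is finite exactly because `a < b`, and by dominated convergence the
lower expectation tends to it as `x → 0⁺`.
-/

open Real Set Filter MeasureTheory ProbabilityTheory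

open scoped ENNReal Topology

namespace ProbabilityTheory

instance instSFiniteGammaMeasure (a r : ℝ) : SFinite (gammaMeasure a r) := by
  unfold gammaMeasure; infer_instance

@[fun_prop]
lemma measurable_gammaPDF (a r : ℝ) : Measurable (gammaPDF a r) :=
  (measurable_gammaPDFReal a r).ennreal_ofReal

lemma ae_pos_gammaMeasure (a r : ℝ) : ∀ᵐ x ∂gammaMeasure a r, 0 < x := by
  rw [gammaMeasure, ae_withDensity_iff (measurable_gammaPDF a r)]
  filter_upwards [Measure.ae_ne volume 0] with x hx0 hpdf
  exact hx0.symm.lt_of_le (not_lt.1 fun hx => hpdf (gammaPDF_of_neg hx))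

lemma lintegral_Icc_ofReal_mul_rpow_sub_one {a c t : ℝ} (ha : 0 < a) (hc : 0 ≤ c)
    (ht : 0 ≤ t) :
    ∫⁻ u in Icc 0 t, ENNReal.ofReal (c * u ^ (a - 1)) = ENNReal.ofReal (c * (t ^ a / a)) := by
  rw [← Measure.restrict_congr_set Ioc_ae_eq_Icc, ← ofReal_integral_eq_lintegral_ofReal]
  · rw [integral_const_mul, ← intervalIntegral.integral_of_le ht,
      integral_rpow (Or.inl (by linarith)), sub_add_cancel, zero_rpow ha.ne', sub_zero]
  · exact ((intervalIntegral.intervalIntegrable_rpow' (by linarith)).const_mul c).1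
  · exact (ae_restrict_iff' measurableSet_Ioc).2 (ae_of_all _ fun u hu => by
      have := rpow_nonneg hu.1.le (a - 1); positivity)

lemma gammaMeasure_Iic_eq_lintegral_Icc {a r t : ℝ} (ht : 0 ≤ t) :
    gammaMeasure a r (Iic t) =
      ∫⁻ u in Icc 0 t, ENNReal.ofReal (r ^ a / Gamma a * u ^ (a - 1) * exp (-(r * u))) := by
  rw [gammaMeasure, withDensity_apply _ measurableSet_Iic,
    lintegral_Iic_eq_lintegral_Iio_add_Icc _ ht, lintegral_gammaPDF_of_nonpos le_rfl, zero_add]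
  exact setLIntegral_congr_fun measurableSet_Icc fun u hu => gammaPDF_of_nonneg hu.1

lemma rpow_div_Gamma_mul_rpow_div {a r t : ℝ} (ha : 0 < a) (hr : 0 ≤ r) (ht : 0 ≤ t) :
    r ^ a / Gamma a * (t ^ a / a) = (r * t) ^ a / Gamma (a + 1) := by
  rw [mul_rpow hr ht, Gamma_add_one ha.ne']
  field_simp

lemma gammaMeasure_Iic_le {a r t : ℝ} (ha : 0 < a) (hr : 0 ≤ r) (ht : 0 ≤ t) :
    gammaMeasure a r (Iic t) ≤ ENNReal.ofReal ((r * t) ^ a / Gamma (a + 1)) := by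
  have hc : 0 ≤ r ^ a / Gamma a := by have := Gamma_pos_of_pos ha; positivity
  rw [gammaMeasure_Iic_eq_lintegral_Icc ht, ← rpow_div_Gamma_mul_rpow_div ha hr ht,
    ← lintegral_Icc_ofReal_mul_rpow_sub_one ha hc ht]
  refine setLIntegral_mono (by fun_prop) fun u hu => ENNReal.ofReal_le_ofReal ?_
  have := rpow_nonneg hu.1 (a - 1)
  exact mul_le_of_le_one_right (by positivity) (exp_le_one_iff.2 (by nlinarith [hu.1]))

lemma ofReal_exp_mul_le_gammaMeasure_Iic {a r t : ℝ} (ha : 0 < a) (hr : 0 ≤ r) (ht : 0 ≤ t) :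
    ENNReal.ofReal (exp (-(r * t)) * ((r * t) ^ a / Gamma (a + 1))) ≤
      gammaMeasure a r (Iic t) := by
  have hG := Gamma_pos_of_pos ha
  have hc : 0 ≤ exp (-(r * t)) * (r ^ a / Gamma a) := by positivity
  rw [gammaMeasure_Iic_eq_lintegral_Icc ht, ← rpow_div_Gamma_mul_rpow_div ha hr ht, ← mul_assoc,
    ← lintegral_Icc_ofReal_mul_rpow_sub_one ha hc ht]
  refine setLIntegral_mono (by fun_prop) fun u hu => ENNReal.ofReal_le_ofReal ?_
  have := rpow_nonneg hu.1 (a - 1)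
  have : exp (-(r * t)) ≤ exp (-(r * u)) := exp_le_exp.2 (by nlinarith [hu.2])
  calc exp (-(r * t)) * (r ^ a / Gamma a) * u ^ (a - 1)
      ≤ exp (-(r * u)) * (r ^ a / Gamma a) * u ^ (a - 1) := by gcongr
    _ = r ^ a / Gamma a * u ^ (a - 1) * exp (-(r * u)) := by ring

lemma gammaPDF_mul_ofReal_rpow_neg {b r s v : ℝ} (hb : 0 < b) (hr : 0 < r) (hs : s < b)
    (hv : v ≠ 0) :
    gammaPDF b r v * ENNReal.ofReal (v ^ (-s)) =
      ENNReal.ofReal (r ^ s * Gamma (b - s) / Gamma b) * gammaPDF (b - s) r v := by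
  rcases hv.lt_or_gt with hv | hv
  · simp [gammaPDF_of_neg hv]
  have hGb : 0 < Gamma b := Gamma_pos_of_pos hb
  have hGbs : 0 < Gamma (b - s) := Gamma_pos_of_pos (sub_pos.2 hs)
  rw [gammaPDF_of_nonneg hv.le, gammaPDF_of_nonneg hv.le, ← ENNReal.ofReal_mul (by positivity),
    ← ENNReal.ofReal_mul (by positivity)]
  have hvpow : v ^ (b - 1) * v ^ (-s) = v ^ (b - s - 1) := by rw [← rpow_add hv]; ring_nf
  have hrpow : r ^ s * r ^ (b - s) = r ^ b := by rw [← rpow_add hr]; ring_nf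
  rw [← hvpow, ← hrpow]
  congr 1
  field_simp

lemma lintegral_ofReal_rpow_neg_gammaMeasure {b r s : ℝ} (hb : 0 < b) (hr : 0 < r)
    (hs : s < b) :
    ∫⁻ v, ENNReal.ofReal (v ^ (-s)) ∂gammaMeasure b r =
      ENNReal.ofReal (r ^ s * Gamma (b - s) / Gamma b) := by
  rw [gammaMeasure, lintegral_withDensity_eq_lintegral_mul _ (by fun_prop) (by fun_prop)]
  calc ∫⁻ v, (gammaPDF b r * fun v => ENNReal.ofReal (v ^ (-s))) v
      = ∫⁻ v, ENNReal.ofReal (r ^ s * Gamma (b - s) / Gamma b) * gammaPDF (b - s) r v := by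
        refine lintegral_congr_ae ?_
        filter_upwards [Measure.ae_ne volume 0] with v hv
        exact gammaPDF_mul_ofReal_rpow_neg hb hr hs hv
    _ = _ := by
        rw [lintegral_const_mul _ (by fun_prop), lintegral_gammaPDF_eq_one (sub_pos.2 hs) hr,
          mul_one]

lemma mul_div_rpow_eq_mul_rpow_neg {a r x v : ℝ} (hrx : 0 ≤ r * x) (hv : 0 < v) :
    (r * (x / v)) ^ a = (r * x) ^ a * v ^ (-a) := by
  rw [← mul_div_assoc, div_rpow hrx hv.le, rpow_neg hv.le, div_eq_mul_inv]

lemma prod_setOf_mul_le_eq_lintegral {μ ν : Measure ℝ} [SFinite μ] [SFinite ν]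
    (hν : ∀ᵐ v ∂ν, 0 < v) (x : ℝ) :
    μ.prod ν {p : ℝ × ℝ | p.1 * p.2 ≤ x} = ∫⁻ v, μ (Iic (x / v)) ∂ν := by
  rw [Measure.prod_apply_symm (measurableSet_le (by fun_prop) measurable_const)]
  refine lintegral_congr_ae ?_
  filter_upwards [hν] with v hv
  congr 1
  ext u
  simp [le_div_iff₀ hv]

lemma tendsto_lintegral_ofReal_exp_neg_div_mul {ν : Measure ℝ} (hν : ∀ᵐ v ∂ν, 0 < v)
    {f : ℝ → ℝ≥0∞} (hf : Measurable f) (hfi : ∫⁻ v, f v ∂ν ≠ ∞) :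
    Tendsto (fun x => ∫⁻ v, ENNReal.ofReal (exp (-(x / v))) * f v ∂ν) (𝓝[≥] 0)
      (𝓝 (∫⁻ v, f v ∂ν)) := by
  refine tendsto_lintegral_filter_of_dominated_convergence f
    (Eventually.of_forall fun x => by fun_prop) ?_ hfi (ae_of_all _ fun v => ?_)
  · filter_upwards [self_mem_nhdsWithin] with x (hx : 0 ≤ x)
    filter_upwards [hν] with v hv
    refine mul_le_of_le_one_left' (ENNReal.ofReal_le_one.2 (exp_le_one_iff.2 ?_))
    linarith [div_nonneg hx hv.le]
  · have hexp : Tendsto (fun x : ℝ => ENNReal.ofReal (exp (-(x / v)))) (𝓝 0) (𝓝 1) := by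
      have hcont : Continuous fun x : ℝ => ENNReal.ofReal (exp (-(x / v))) :=
        ENNReal.continuous_ofReal.comp (by fun_prop)
      simpa using hcont.tendsto 0
    simpa using (ENNReal.Tendsto.mul_const (hexp.mono_left nhdsWithin_le_nhds) (by simp))

section ProductOfGammas

variable {a b r r' x : ℝ}

lemma prod_gammaMeasure_setOf_mul_le_le (ha : 0 < a) (hab : a < b) (hr : 0 ≤ r) (hr' : 0 < r')
    (hx : 0 ≤ x) :
    (gammaMeasure a r).prod (gammaMeasure b r') {p | p.1 * p.2 ≤ x} ≤
      ENNReal.ofReal ((r * x) ^ a / Gamma (a + 1) * (r' ^ a * Gamma (b - a) / Gamma b)) := by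
  have hc : 0 ≤ (r * x) ^ a / Gamma (a + 1) := by
    have := Gamma_pos_of_pos (add_pos ha one_pos); positivity
  rw [prod_setOf_mul_le_eq_lintegral (ae_pos_gammaMeasure b r'), ENNReal.ofReal_mul hc,
    ← lintegral_ofReal_rpow_neg_gammaMeasure (ha.trans hab) hr' hab,
    ← lintegral_const_mul _ (by fun_prop)]
  refine lintegral_mono_ae ?_
  filter_upwards [ae_pos_gammaMeasure b r'] with v hv
  refine (gammaMeasure_Iic_le ha hr (div_nonneg hx hv.le)).trans_eq ?_
  rw [← ENNReal.ofReal_mul hc, mul_div_rpow_eq_mul_rpow_neg (mul_nonneg hr hx) hv]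
  ring_nf

lemma ofReal_mul_lintegral_le_prod_gammaMeasure_setOf_mul_le (ha : 0 < a) (hr : 0 ≤ r)
    (hx : 0 ≤ x) :
    ENNReal.ofReal ((r * x) ^ a / Gamma (a + 1)) *
        ∫⁻ v, ENNReal.ofReal (exp (-(r * x / v))) * ENNReal.ofReal (v ^ (-a))
          ∂gammaMeasure b r' ≤
      (gammaMeasure a r).prod (gammaMeasure b r') {p | p.1 * p.2 ≤ x} := by
  have hc : 0 ≤ (r * x) ^ a / Gamma (a + 1) := by
    have := Gamma_pos_of_pos (add_pos ha one_pos); positivity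
  rw [prod_setOf_mul_le_eq_lintegral (ae_pos_gammaMeasure b r'),
    ← lintegral_const_mul _ (by fun_prop)]
  refine lintegral_mono_ae ?_
  filter_upwards [ae_pos_gammaMeasure b r'] with v hv
  refine Eq.trans_le ?_ (ofReal_exp_mul_le_gammaMeasure_Iic ha hr (div_nonneg hx hv.le))
  rw [← ENNReal.ofReal_mul (by positivity), ← ENNReal.ofReal_mul hc,
    mul_div_rpow_eq_mul_rpow_neg (mul_nonneg hr hx) hv, mul_div_assoc]
  ring_nf

theorem tendsto_prod_gammaMeasure_setOf_mul_le_div (ha : 0 < a) (hab : a < b) (hr : 0 < r)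
    (hr' : 0 < r') :
    Tendsto (fun x => ((gammaMeasure a r).prod (gammaMeasure b r') {p | p.1 * p.2 ≤ x}).toReal /
        ((r * x) ^ a / Gamma (a + 1) * (r' ^ a * Gamma (b - a) / Gamma b)))
      (𝓝[>] 0) (𝓝 1) := by
  set K := r' ^ a * Gamma (b - a) / Gamma b
  have hK : 0 < K := by
    have := Gamma_pos_of_pos (sub_pos.2 hab); have := Gamma_pos_of_pos (ha.trans hab)
    positivity
  set J := fun y => ∫⁻ v, ENNReal.ofReal (exp (-(y / v))) * ENNReal.ofReal (v ^ (-a))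
    ∂gammaMeasure b r'
  have hJ : Tendsto J (𝓝[≥] 0) (𝓝 (ENNReal.ofReal K)) := by
    rw [← lintegral_ofReal_rpow_neg_gammaMeasure (ha.trans hab) hr' hab]
    refine tendsto_lintegral_ofReal_exp_neg_div_mul (ae_pos_gammaMeasure b r') (by fun_prop) ?_
    rw [lintegral_ofReal_rpow_neg_gammaMeasure (ha.trans hab) hr' hab]
    exact ENNReal.ofReal_ne_top
  have hrx : Tendsto (r * ·) (𝓝[>] 0) (𝓝[≥] 0) :=
    tendsto_nhdsWithin_of_tendsto_nhds_of_eventually_within _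
      (((continuous_const_mul r).tendsto' 0 0 (mul_zero r)).mono_left nhdsWithin_le_nhds)
      (eventually_nhdsWithin_of_forall fun x (hx : 0 < x) => (mul_pos hr hx).le)
  have hlower : Tendsto (fun x => (J (r * x)).toReal / K) (𝓝[>] 0) (𝓝 1) := by
    simpa [ENNReal.toReal_ofReal hK.le, hK.ne'] using
      ((ENNReal.tendsto_toReal ENNReal.ofReal_ne_top).comp (hJ.comp hrx)).div_const K
  have hc : ∀ x, 0 < x → 0 < (r * x) ^ a / Gamma (a + 1) := fun x hx => by
    have := Gamma_pos_of_pos (add_pos ha one_pos); have := mul_pos hr hx; positivity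
  refine tendsto_of_tendsto_of_tendsto_of_le_of_le' hlower tendsto_const_nhds ?_ ?_
  · filter_upwards [self_mem_nhdsWithin] with x (hx : 0 < x)
    have hupper := prod_gammaMeasure_setOf_mul_le_le ha hab hr.le hr' hx.le
    have hJx := ofReal_mul_lintegral_le_prod_gammaMeasure_setOf_mul_le ha hr.le hx.le (b := b)
      (r' := r')
    calc (J (r * x)).toReal / K
        = (r * x) ^ a / Gamma (a + 1) * (J (r * x)).toReal / ((r * x) ^ a / Gamma (a + 1) * K) :=
          (mul_div_mul_left _ _ (hc x hx).ne').symm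
      _ ≤ _ := by
          gcongr
          rw [← ENNReal.toReal_ofReal (hc x hx).le, ← ENNReal.toReal_mul]
          exact ENNReal.toReal_mono (ne_top_of_le_ne_top ENNReal.ofReal_ne_top hupper) hJx
  · filter_upwards [self_mem_nhdsWithin] with x (hx : 0 < x)
    rw [div_le_one (mul_pos (hc x hx) hK)]
    exact ENNReal.toReal_le_of_le_ofReal (mul_pos (hc x hx) hK).le
      (prod_gammaMeasure_setOf_mul_le_le ha hab hr.le hr' hx.le)

end ProductOfGammas

end ProbabilityTheory

theorem cdf_product_gammas_asymp_unbalanced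
    {Ω : Type*} [MeasureSpace Ω] [IsProbabilityMeasure (ℙ : Measure Ω)]
    (N_T N_R : ℕ) (hNR : 1 ≤ N_R) (h : N_R < N_T)
    (U V : Ω → ℝ) (hU : Measurable U) (hV : Measurable V)
    (hUlaw : Measure.map U ℙ = gammaMeasure N_R 1)
    (hVlaw : Measure.map V ℙ = gammaMeasure N_T 1)
    (hindep : IndepFun U V ℙ) :
    Tendsto (fun x : ℝ =>
        (ℙ {ω | U ω * V ω ≤ x}).toReal /
          (Real.Gamma ((N_T : ℝ) - N_R) * x ^ N_R /
            (Real.Gamma N_T * Real.Gamma N_R * N_R)))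
      (nhdsWithin 0 (Ioi 0)) (nhds 1) := by
  have ha : (0 : ℝ) < N_R := by exact_mod_cast hNR
  have hab : (N_R : ℝ) < N_T := by exact_mod_cast h
  have hlaw : Measure.map (fun ω => (U ω, V ω)) ℙ =
      (gammaMeasure N_R 1).prod (gammaMeasure N_T 1) := by
    rw [← hUlaw, ← hVlaw]
    exact (indepFun_iff_map_prod_eq_prod_map_map hU.aemeasurable hV.aemeasurable).1 hindep
  refine (tendsto_prod_gammaMeasure_setOf_mul_le_div ha hab one_pos one_pos).congr fun x => ?_
  rw [← hlaw, Measure.map_apply (hU.prodMk hV) (measurableSet_le (by fun_prop) measurable_const),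
    one_mul, one_rpow, one_mul, rpow_natCast, Gamma_add_one ha.ne']
  congr 1
  ring
end

section
/- Let U, V ~ Gamma(N, 1) be independent with positive integer N, and X = U·V. Then lim_{x→0⁺} F_X(x) / (x^N (-ln x) / (N · Γ(N)²)) = 1, where F_X is the CDF of X. -/
/-!
With `μ = Γ(a, 1)` and `G` its distribution function, `P(UV ≤ x) = ∫ G(x / u) dμ(u)`. On `[0, t]`
the density `s ^ (a - 1) e^{-s} / Γ(a)` lies between `e^{-t}` and `1` times `s ^ (a - 1) / Γ(a)`,
so `G(t)` is `t ^ a / (a Γ(a))` up to such a factor. Against the density of `U` the powers of `u`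
cancel, leaving `x ^ a / (a Γ(a)²)` times `∫_{u > x} e^{-u} / u du = -log x + O(1)`, while the range
`u ≤ x` only contributes `G(x) = O(x ^ a)`.
-/

open Real Set Filter MeasureTheory ProbabilityTheory

open scoped ENNReal Topology

theorem MeasureTheory.ofReal_integral_le_lintegral_ofReal {α : Type*} [MeasurableSpace α]
    {μ : Measure α} {f : α → ℝ} (hf : Integrable f μ) :
    ENNReal.ofReal (∫ x, f x ∂μ) ≤ ∫⁻ x, ENNReal.ofReal (f x) ∂μ := by
  rw [integral_eq_lintegral_pos_part_sub_lintegral_neg_part hf]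
  calc ENNReal.ofReal (_ - _) ≤ ENNReal.ofReal (∫⁻ x, ENNReal.ofReal (f x) ∂μ).toReal :=
        ENNReal.ofReal_le_ofReal (sub_le_self _ ENNReal.toReal_nonneg)
    _ ≤ _ := ENNReal.ofReal_toReal_le

theorem tendsto_div_mul_of_mul_sub_le_of_le_mul_add {α : Type*} {l : Filter α}
    {f g L : α → ℝ} {A B : ℝ} (hL : Tendsto L l atTop) (hg : ∀ᶠ x in l, 0 < g x)
    (hlow : ∀ᶠ x in l, g x * (L x - A) ≤ f x) (hup : ∀ᶠ x in l, f x ≤ g x * (L x + B)) :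
    Tendsto (fun x ↦ f x / (g x * L x)) l (𝓝 1) := by
  have hlim : ∀ C : ℝ, Tendsto (fun x ↦ 1 + C * (L x)⁻¹) l (𝓝 1) := fun C ↦ by
    simpa using tendsto_const_nhds.add (hL.inv_tendsto_atTop.const_mul C)
  refine tendsto_of_tendsto_of_tendsto_of_le_of_le' (hlim (-A)) (hlim B) ?_ ?_
  · filter_upwards [hg, hlow, hL.eventually_gt_atTop 0] with x hgx hfx hLx
    rw [le_div_iff₀ (by positivity)]
    calc (1 + -A * (L x)⁻¹) * (g x * L x) = g x * (L x - A) := by field_simp; ring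
      _ ≤ f x := hfx
  · filter_upwards [hg, hup, hL.eventually_gt_atTop 0] with x hgx hfx hLx
    rw [div_le_iff₀ (by positivity)]
    calc f x ≤ g x * (L x + B) := hfx
      _ = (1 + B * (L x)⁻¹) * (g x * L x) := by field_simp

theorem setOf_mul_le_eq_Iic_div {u x : ℝ} (hu : 0 < u) :
    {v : ℝ | u * v ≤ x} = Iic (x / u) := by
  ext v
  exact (le_div_iff₀' hu).symm

theorem setLIntegral_Icc_ofReal_mul_rpow_sub_one {a k t : ℝ} (ha : 0 < a) (hk : 0 ≤ k)
    (ht : 0 ≤ t) :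
    ∫⁻ s in Icc 0 t, ENNReal.ofReal (k * s ^ (a - 1)) = ENNReal.ofReal (k * t ^ a / a) := by
  have hint : ∫ s in Icc 0 t, k * s ^ (a - 1) = k * t ^ a / a := by
    rw [integral_Icc_eq_integral_Ioc, ← intervalIntegral.integral_of_le ht,
      intervalIntegral.integral_const_mul, integral_rpow (by left; linarith),
      sub_add_cancel, zero_rpow ha.ne', sub_zero, mul_div_assoc]
  rw [← hint, ofReal_integral_eq_lintegral_ofReal]
  · exact (intervalIntegrable_iff_integrableOn_Icc_of_le ht).mp
      ((intervalIntegral.intervalIntegrable_rpow' (by linarith)).const_mul k)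
  · filter_upwards [ae_restrict_mem measurableSet_Icc] with s hs
    exact mul_nonneg hk (rpow_nonneg hs.1 _)

theorem setLIntegral_Ioi_ofReal_exp_neg_div_le {x : ℝ} (hx : 0 < x) (hx1 : x ≤ 1) :
    ∫⁻ u in Ioi x, ENNReal.ofReal (exp (-u) / u) ≤ ENNReal.ofReal (-log x + 1) := by
  have hlog : ∫⁻ u in Ioc x 1, ENNReal.ofReal (1 / u) = ENNReal.ofReal (-log x) := by
    rw [← ofReal_integral_eq_lintegral_ofReal, ← intervalIntegral.integral_of_le hx1,
      integral_one_div_of_pos hx one_pos, log_div one_ne_zero hx.ne', log_one, zero_sub]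
    · refine (intervalIntegrable_iff_integrableOn_Ioc_of_le hx1).mp ?_
      refine intervalIntegral.intervalIntegrable_one_div (fun u hu ↦ ?_) continuousOn_id
      rw [uIcc_of_le hx1] at hu
      exact (hx.trans_le hu.1).ne'
    · filter_upwards [ae_restrict_mem measurableSet_Ioc] with u hu
      exact (one_div_pos.mpr (hx.trans hu.1)).le
  have hexp : ∫⁻ u in Ioi 1, ENNReal.ofReal (exp (-u)) = ENNReal.ofReal (exp (-1)) := by
    rw [← ofReal_integral_eq_lintegral_ofReal (integrableOn_exp_neg_Ioi 1)
      (ae_of_all _ fun u ↦ (exp_pos _).le), integral_exp_neg_Ioi]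
  rw [← Ioc_union_Ioi_eq_Ioi hx1, lintegral_union measurableSet_Ioi Ioc_disjoint_Ioi_same]
  calc _ ≤ (∫⁻ u in Ioc x 1, ENNReal.ofReal (1 / u)) +
        ∫⁻ u in Ioi 1, ENNReal.ofReal (exp (-u)) := by
        gcongr ?_ + ?_
        · refine setLIntegral_mono' measurableSet_Ioc fun u hu ↦ ?_
          have hu0 := hx.trans hu.1
          gcongr
          exact exp_le_one_iff.mpr (by linarith)
        · refine setLIntegral_mono' measurableSet_Ioi fun u (hu : 1 < u) ↦ ?_
          gcongr
          exact div_le_self (exp_pos _).le hu.le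
    _ ≤ ENNReal.ofReal (-log x + 1) := by
        rw [hlog, hexp,
          ← ENNReal.ofReal_add (neg_nonneg.mpr (log_nonpos hx.le hx1)) (exp_pos _).le]
        gcongr
        exact exp_le_one_iff.mpr (by norm_num)

theorem integral_one_div_sub_one_sub_div_sq {x : ℝ} (hx : 0 < x) :
    ∫ u in x..1, (1 / u - 1 - x / u ^ 2) = -log x - 2 * (1 - x) := by
  have hpos : ∀ u ∈ uIcc x 1, 0 < u := fun u hu ↦ (lt_min hx one_pos).trans_le hu.1
  have hderiv : ∀ u ∈ uIcc x 1,
      HasDerivAt (fun u ↦ log u - u + x * u⁻¹) (1 / u - 1 - x / u ^ 2) u := fun u hu ↦ by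
    have hu := (hpos u hu).ne'
    exact (((hasDerivAt_log hu).sub (hasDerivAt_id u)).add
      ((hasDerivAt_inv hu).const_mul x)).congr_deriv (by ring)
  rw [intervalIntegral.integral_eq_sub_of_hasDerivAt hderiv]
  · field_simp
    rw [log_one]
    ring
  · refine ContinuousOn.intervalIntegrable ?_
    fun_prop (disch := intro u hu; have := hpos u hu; positivity)

namespace ProbabilityTheory

theorem gammaPDF_one_of_nonneg (a : ℝ) {s : ℝ} (hs : 0 ≤ s) :
    gammaPDF a 1 s = ENNReal.ofReal (s ^ (a - 1) * exp (-s) / Gamma a) := by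
  rw [gammaPDF_of_nonneg hs, one_rpow, one_mul]
  ring_nf

theorem gammaMeasure_Iic_eq_setLIntegral (a r : ℝ) {t : ℝ} (ht : 0 ≤ t) :
    gammaMeasure a r (Iic t) = ∫⁻ s in Icc 0 t, gammaPDF a r s := by
  rw [gammaMeasure, withDensity_apply _ measurableSet_Iic,
    lintegral_Iic_eq_lintegral_Iio_add_Icc _ ht, lintegral_gammaPDF_of_nonpos le_rfl, zero_add]

theorem gammaMeasure_one_Iic_le {a t : ℝ} (ha : 0 < a) (ht : 0 ≤ t) :
    gammaMeasure a 1 (Iic t) ≤ ENNReal.ofReal (t ^ a / (a * Gamma a)) := by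
  have hΓ := Gamma_pos_of_pos ha
  rw [gammaMeasure_Iic_eq_setLIntegral a 1 ht]
  calc ∫⁻ s in Icc 0 t, gammaPDF a 1 s
      ≤ ∫⁻ s in Icc 0 t, ENNReal.ofReal ((Gamma a)⁻¹ * s ^ (a - 1)) := by
        refine setLIntegral_mono' measurableSet_Icc fun s hs ↦ ?_
        rw [gammaPDF_one_of_nonneg a hs.1, ← div_eq_inv_mul]
        have := rpow_nonneg hs.1 (a - 1)
        gcongr
        exact mul_le_of_le_one_right this (exp_le_one_iff.mpr (neg_nonpos.mpr hs.1))
    _ = ENNReal.ofReal (t ^ a / (a * Gamma a)) := by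
        rw [setLIntegral_Icc_ofReal_mul_rpow_sub_one ha (by positivity) ht]
        congr 1
        field_simp

theorem ofReal_exp_neg_mul_le_gammaMeasure_one_Iic {a t : ℝ} (ha : 0 < a) (ht : 0 ≤ t) :
    ENNReal.ofReal (exp (-t) * t ^ a / (a * Gamma a)) ≤ gammaMeasure a 1 (Iic t) := by
  have hΓ := Gamma_pos_of_pos ha
  rw [gammaMeasure_Iic_eq_setLIntegral a 1 ht]
  calc ENNReal.ofReal (exp (-t) * t ^ a / (a * Gamma a))
      = ∫⁻ s in Icc 0 t, ENNReal.ofReal (exp (-t) / Gamma a * s ^ (a - 1)) := by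
        rw [setLIntegral_Icc_ofReal_mul_rpow_sub_one ha (by positivity) ht]
        congr 1
        field_simp
    _ ≤ ∫⁻ s in Icc 0 t, gammaPDF a 1 s := by
        refine setLIntegral_mono' measurableSet_Icc fun s hs ↦ ?_
        rw [gammaPDF_one_of_nonneg a hs.1, div_mul_eq_mul_div, mul_comm]
        have := rpow_nonneg hs.1 (a - 1)
        gcongr
        exact hs.2

theorem gammaPDF_one_mul_ofReal_div_rpow {a k x u : ℝ} (ha : 0 < a) (hx : 0 ≤ x)
    (hu : 0 < u) :
    gammaPDF a 1 u * ENNReal.ofReal (k * (x / u) ^ a / (a * Gamma a)) =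
      ENNReal.ofReal (x ^ a / (a * Gamma a ^ 2) * (k * exp (-u) / u)) := by
  have hΓ := Gamma_pos_of_pos ha
  rw [gammaPDF_one_of_nonneg a hu.le, ← ENNReal.ofReal_mul (by positivity), div_rpow hx hu.le,
    rpow_sub_one hu.ne']
  congr 1
  field_simp

theorem setLIntegral_Ioi_gammaMeasure_setOf_mul_le_le {a x : ℝ} (ha : 0 < a) (hx : 0 < x)
    (hx1 : x ≤ 1) :
    ∫⁻ u in Ioi x, gammaMeasure a 1 {v | u * v ≤ x} ∂gammaMeasure a 1 ≤
      ENNReal.ofReal (x ^ a / (a * Gamma a ^ 2) * (-log x + 1)) := by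
  have hΓ := Gamma_pos_of_pos ha
  set c := x ^ a / (a * Gamma a ^ 2)
  calc _ ≤ ∫⁻ u in Ioi x,
          ENNReal.ofReal (1 * (x / u) ^ a / (a * Gamma a)) ∂gammaMeasure a 1 := by
        refine setLIntegral_mono' measurableSet_Ioi fun u (hu : x < u) ↦ ?_
        rw [setOf_mul_le_eq_Iic_div (hx.trans hu), one_mul]
        exact gammaMeasure_one_Iic_le ha (div_nonneg hx.le (hx.trans hu).le)
    _ = ∫⁻ u in Ioi x, gammaPDF a 1 u * ENNReal.ofReal (1 * (x / u) ^ a / (a * Gamma a)) :=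
        setLIntegral_withDensity_eq_setLIntegral_mul _
          (measurable_gammaPDFReal a 1).ennreal_ofReal (by fun_prop) measurableSet_Ioi
    _ = ∫⁻ u in Ioi x, ENNReal.ofReal c * ENNReal.ofReal (exp (-u) / u) := by
        refine setLIntegral_congr_fun measurableSet_Ioi fun u (hu : x < u) ↦ ?_
        rw [gammaPDF_one_mul_ofReal_div_rpow ha hx.le (hx.trans hu), one_mul,
          ENNReal.ofReal_mul (by positivity)]
    _ ≤ ENNReal.ofReal c * ENNReal.ofReal (-log x + 1) := by
        rw [lintegral_const_mul _ (by fun_prop)]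
        gcongr
        exact setLIntegral_Ioi_ofReal_exp_neg_div_le hx hx1
    _ = ENNReal.ofReal (c * (-log x + 1)) := (ENNReal.ofReal_mul (by positivity)).symm

theorem ofReal_le_setLIntegral_Ioc_gammaMeasure_setOf_mul_le {a x : ℝ} (ha : 0 < a)
    (hx : 0 < x) (hx1 : x ≤ 1) :
    ENNReal.ofReal (x ^ a / (a * Gamma a ^ 2) * (-log x - 2 * (1 - x))) ≤
      ∫⁻ u in Ioc x 1, gammaMeasure a 1 {v | u * v ≤ x} ∂gammaMeasure a 1 := by
  have hΓ := Gamma_pos_of_pos ha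
  set c := x ^ a / (a * Gamma a ^ 2)
  have hcont : ContinuousOn (fun u ↦ c * (1 / u - 1 - x / u ^ 2)) (Icc x 1) := by
    fun_prop (disch := intro u hu; have := hx.trans_le hu.1; positivity)
  calc _ = ENNReal.ofReal (∫ u in Ioc x 1, c * (1 / u - 1 - x / u ^ 2)) := by
        rw [integral_const_mul, ← intervalIntegral.integral_of_le hx1,
          integral_one_div_sub_one_sub_div_sq hx]
    _ ≤ ∫⁻ u in Ioc x 1, ENNReal.ofReal (c * (1 / u - 1 - x / u ^ 2)) :=
        ofReal_integral_le_lintegral_ofReal (hcont.integrableOn_Icc.mono_set Ioc_subset_Icc_self)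
    _ ≤ ∫⁻ u in Ioc x 1,
          gammaPDF a 1 u * ENNReal.ofReal (exp (-(x / u)) * (x / u) ^ a / (a * Gamma a)) := by
        refine setLIntegral_mono' measurableSet_Ioc fun u hu ↦ ?_
        have hu0 : 0 < u := hx.trans hu.1
        rw [gammaPDF_one_mul_ofReal_div_rpow ha hx.le hu0]
        have hsplit : 1 / u - 1 - x / u ^ 2 = (1 - (x / u + u)) / u := by field_simp; ring
        rw [hsplit, ← exp_add, ← neg_add]
        gcongr
        linarith [add_one_le_exp (-(x / u + u))]
    _ = ∫⁻ u in Ioc x 1,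
          ENNReal.ofReal (exp (-(x / u)) * (x / u) ^ a / (a * Gamma a)) ∂gammaMeasure a 1 :=
        (setLIntegral_withDensity_eq_setLIntegral_mul _
          (measurable_gammaPDFReal a 1).ennreal_ofReal (by fun_prop) measurableSet_Ioc).symm
    _ ≤ _ := by
        refine setLIntegral_mono' measurableSet_Ioc fun u hu ↦ ?_
        have hu0 : 0 < u := hx.trans hu.1
        rw [setOf_mul_le_eq_Iic_div hu0]
        exact ofReal_exp_neg_mul_le_gammaMeasure_one_Iic ha (div_nonneg hx.le hu0.le)

theorem gammaMeasure_prod_setOf_mul_le_le {a x : ℝ} (ha : 0 < a) (hx : 0 < x) (hx1 : x ≤ 1) :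
    (gammaMeasure a 1).prod (gammaMeasure a 1) {p | p.1 * p.2 ≤ x} ≤
      ENNReal.ofReal (x ^ a / (a * Gamma a ^ 2) * (-log x + (1 + Gamma a))) := by
  have hΓ := Gamma_pos_of_pos ha
  have : IsProbabilityMeasure (gammaMeasure a 1) := isProbabilityMeasure_gammaMeasure ha one_pos
  have hsmall : ∫⁻ u in Iic x, gammaMeasure a 1 {v | u * v ≤ x} ∂gammaMeasure a 1 ≤
      ENNReal.ofReal (x ^ a / (a * Gamma a ^ 2) * Gamma a) :=
    calc _ ≤ ∫⁻ _ in Iic x, 1 ∂gammaMeasure a 1 :=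
          setLIntegral_mono' measurableSet_Iic fun _ _ ↦ prob_le_one
      _ = gammaMeasure a 1 (Iic x) := setLIntegral_one _
      _ ≤ _ := (gammaMeasure_one_Iic_le ha hx.le).trans_eq (by congr 1; field_simp)
  rw [Measure.prod_apply (measurableSet_le (by fun_prop) (by fun_prop)),
    ← lintegral_add_compl _ (measurableSet_Iic (a := x)), compl_Iic]
  calc _ ≤ _ := add_le_add hsmall (setLIntegral_Ioi_gammaMeasure_setOf_mul_le_le ha hx hx1)
    _ = _ := by
        rw [← ENNReal.ofReal_add (by positivity)
          (mul_nonneg (by positivity) (by linarith [log_nonpos hx.le hx1]))]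
        ring_nf

theorem ofReal_le_gammaMeasure_prod_setOf_mul_le {a x : ℝ} (ha : 0 < a) (hx : 0 < x)
    (hx1 : x ≤ 1) :
    ENNReal.ofReal (x ^ a / (a * Gamma a ^ 2) * (-log x - 2)) ≤
      (gammaMeasure a 1).prod (gammaMeasure a 1) {p | p.1 * p.2 ≤ x} := by
  have hΓ := Gamma_pos_of_pos ha
  have : IsProbabilityMeasure (gammaMeasure a 1) := isProbabilityMeasure_gammaMeasure ha one_pos
  rw [Measure.prod_apply (measurableSet_le (by fun_prop) (by fun_prop))]
  calc _ ≤ ENNReal.ofReal (x ^ a / (a * Gamma a ^ 2) * (-log x - 2 * (1 - x))) := by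
        gcongr
        linarith
    _ ≤ _ := ofReal_le_setLIntegral_Ioc_gammaMeasure_setOf_mul_le ha hx hx1
    _ ≤ _ := setLIntegral_le_lintegral _ _

theorem tendsto_gammaMeasure_prod_setOf_mul_le_div {a : ℝ} (ha : 0 < a) :
    Tendsto (fun x : ℝ ↦
        ((gammaMeasure a 1).prod (gammaMeasure a 1) {p | p.1 * p.2 ≤ x}).toReal /
          (x ^ a * (-log x) / (a * Gamma a ^ 2))) (𝓝[>] 0) (𝓝 1) := by
  have hΓ := Gamma_pos_of_pos ha
  have : IsProbabilityMeasure (gammaMeasure a 1) := isProbabilityMeasure_gammaMeasure ha one_pos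
  have hIoc : ∀ᶠ x in 𝓝[>] (0 : ℝ), x ∈ Ioc 0 1 := Ioc_mem_nhdsGT one_pos
  refine (tendsto_div_mul_of_mul_sub_le_of_le_mul_add (A := 2) (B := 1 + Gamma a)
    (f := fun x ↦ ((gammaMeasure a 1).prod (gammaMeasure a 1) {p | p.1 * p.2 ≤ x}).toReal)
    (g := fun x ↦ x ^ a / (a * Gamma a ^ 2)) (tendsto_neg_atTop_iff.mpr tendsto_log_nhdsGT_zero)
    ?_ ?_ ?_).congr fun x ↦ by rw [div_mul_eq_mul_div]
  · filter_upwards [self_mem_nhdsWithin] with x (hx : 0 < x)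
    positivity
  · filter_upwards [hIoc] with x hx
    exact (ENNReal.ofReal_le_iff_le_toReal (measure_ne_top _ _)).mp
      (ofReal_le_gammaMeasure_prod_setOf_mul_le ha hx.1 hx.2)
  · filter_upwards [hIoc] with x ⟨hx0, hx1⟩
    refine ENNReal.toReal_le_of_le_ofReal (mul_nonneg (by positivity) ?_)
      (gammaMeasure_prod_setOf_mul_le_le ha hx0 hx1)
    linarith [log_nonpos hx0.le hx1]

end ProbabilityTheory

theorem cdf_product_gammas_asymp_balanced
    {Ω : Type*} [MeasureSpace Ω] [IsProbabilityMeasure (ℙ : Measure Ω)]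
    (N : ℕ) (hN : 1 ≤ N)
    (U V : Ω → ℝ) (hU : Measurable U) (hV : Measurable V)
    (hUlaw : Measure.map U ℙ = gammaMeasure N 1)
    (hVlaw : Measure.map V ℙ = gammaMeasure N 1)
    (hindep : IndepFun U V ℙ) :
    Tendsto (fun x : ℝ =>
        (ℙ {ω | U ω * V ω ≤ x}).toReal /
          (x ^ N * (-Real.log x) / (N * (Real.Gamma N) ^ 2)))
      (nhdsWithin 0 (Ioi 0)) (nhds 1) := by
  have hjoint := (indepFun_iff_map_prod_eq_prod_map_map hU.aemeasurable hV.aemeasurable).mp hindep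
  rw [hUlaw, hVlaw] at hjoint
  have hlaw : ∀ x : ℝ, ℙ {ω | U ω * V ω ≤ x} =
      (gammaMeasure N 1).prod (gammaMeasure N 1) {p | p.1 * p.2 ≤ x} := fun x ↦ by
    rw [← hjoint, Measure.map_apply (hU.prodMk hV) (measurableSet_le (by fun_prop) (by fun_prop))]
    rfl
  refine (tendsto_gammaMeasure_prod_setOf_mul_le_div (Nat.cast_pos.mpr hN)).congr fun x ↦ ?_
  rw [hlaw, rpow_natCast]
end
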